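/- Let 𝒜 be a structure, let ξ₀ < ξ₁ < ⋯ < ξ_{k−1} be ordinals, and let q_k, q_{k−1}, …, q₀ be tuples in 𝒜 with |q_k| ≤ |q_{k−1}| ≤ ⋯ ≤ |q₀| such that for each i < k, q_{i+1} ≤_{ξ_i+1} (the initial segment of q_i of length |q_{i+1}|). Then there exists a tuple p in 𝒜 of length |q₀| whose initial segment of length |q_k| is q_k, and such that for each i ≤ k with i < k as well as i = k, the tuple q_i is ≤_{ξ_i}-below the initial segment of p of length |q_i| (with q_k an actual initial segment of p). -/

import Mathlib

/-!
Common framework: oracle computability via codes, Turing reducibility,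
iterated jumps along ordinals, and first-order structures on ℕ with
atomic diagrams.
-/

namespace DCC

open Classical in
/-- Characteristic value of a proposition. -/
noncomputable def cv (p : Prop) : ℕ := if p then 1 else 0

/-- Codes for partial functions computable relative to an oracle
(Kleene-style codes, with an extra code for the oracle). -/
inductive OCode : Type
  | zero | succ | left | right | oracle
  | pair (a b : OCode)
  | comp (a b : OCode)
  | prec (a b : OCode)
  | rfind' (a : OCode)

/-- A Gödel numbering of oracle codes. -/
def OCode.encode : OCode → ℕ
  | .zero => 0
  | .succ => 1
  | .left => 2
  | .right => 3
  | .oracle => 4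
  | .pair a b => (Nat.pair a.encode b.encode) * 4 + 5
  | .comp a b => (Nat.pair a.encode b.encode) * 4 + 6
  | .prec a b => (Nat.pair a.encode b.encode) * 4 + 7
  | .rfind' a => a.encode * 4 + 8

/-- Evaluation of an oracle code relative to an oracle `O : ℕ →. ℕ`. -/
def evalo (O : ℕ →. ℕ) : OCode → ℕ →. ℕ
  | .zero => fun _ => Part.some 0
  | .succ => fun n => Part.some (n + 1)
  | .left => fun n => Part.some n.unpair.1
  | .right => fun n => Part.some n.unpair.2
  | .oracle => O
  | .pair a b => fun n => Nat.pair <$> evalo O a n <*> evalo O b n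
  | .comp a b => fun n => evalo O b n >>= evalo O a
  | .prec a b =>
    Nat.unpaired fun m n =>
      n.rec (evalo O a m) fun y IH => do
        let i ← IH
        evalo O b (Nat.pair m (Nat.pair y i))
  | .rfind' a =>
    Nat.unpaired fun m n =>
      (Nat.rfind fun k => (fun x => x = 0) <$> evalo O a (Nat.pair m (k + n))).map (· + n)

/-- The characteristic (partial) function of a set of naturals. -/
noncomputable def chi (A : Set ℕ) : ℕ →. ℕ := fun n => Part.some (cv (n ∈ A))

/-- `f` is partial recursive relative to the oracle `O`. -/
def RecursiveIn (O : ℕ →. ℕ) (f : ℕ →. ℕ) : Prop := ∃ c : OCode, evalo O c = f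

/-- Turing reducibility for sets of naturals: `TR A B` means `A ≤_T B`. -/
def TR (A B : Set ℕ) : Prop := RecursiveIn (chi B) (chi A)

/-- Turing equivalence of sets of naturals. -/
def TE (A B : Set ℕ) : Prop := TR A B ∧ TR B A

/-- The Turing join `A ⊕ B`. -/
def join (A B : Set ℕ) : Set ℕ :=
  {n | (∃ m ∈ A, n = 2 * m) ∨ (∃ m ∈ B, n = 2 * m + 1)}

/-- The graph of a function `ℕ → ℕ`, as a set of naturals; used to measure the
Turing degree of a function. -/
def fgraph (f : ℕ → ℕ) : Set ℕ := {n | f n.unpair.1 = n.unpair.2}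

/-- A function `ℕ → ℕ` is computable in the set `A`. -/
def FRecIn (f : ℕ → ℕ) (A : Set ℕ) : Prop := RecursiveIn (chi A) (fun n => Part.some (f n))

/-- `X` is computably enumerable relative to the oracle `O`. -/
def CEIn (X O : Set ℕ) : Prop := ∃ c : OCode, X = {n | (evalo (chi O) c n).Dom}

/-- `X` is `Π⁰₁` relative to the oracle `O`. -/
def PiOneIn (X O : Set ℕ) : Prop := CEIn Xᶜ O

/-- A set is computable if it is Turing reducible to the trivial oracle. -/
def ComputableSet (X : Set ℕ) : Prop := TR X ∅

/-- The Turing jump of a set. -/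
def jump (A : Set ℕ) : Set ℕ :=
  {n | ∃ c : OCode, c.encode = n.unpair.1 ∧ (evalo (chi A) c n.unpair.2).Dom}

open Classical in
/-- The `α`-th iterated Turing jump `A^(α)` of `A`, defined by transfinite recursion;
at countable limit stages we take the join along an enumeration of the earlier levels. -/
noncomputable def jumpIter (A : Set ℕ) (α : Ordinal.{0}) : Set ℕ :=
  Ordinal.limitRecOn α A (fun _ ih => jump ih)
    (fun o _ ih =>
      if h : ∃ f : ℕ → {β // β < o}, Function.Surjective f then
        {n | n.unpair.2 ∈ ih (h.choose n.unpair.1).1 (h.choose n.unpair.1).2}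
      else ∅)

/-- The level of the jump hierarchy corresponding to `Δ⁰_α` (Ash–Knight convention:
`Δ⁰_n`-complete is `0^(n-1)` for finite `n ≥ 1`, while `Δ⁰_α`-complete is `0^(α)`
for infinite `α`). -/
noncomputable def hLevel (α : Ordinal.{0}) : Ordinal.{0} :=
  if α < Ordinal.omega0 then α - 1 else α

/-- A `Δ⁰_α(C)`-complete set. -/
noncomputable def deltaComplete (C : Set ℕ) (α : Ordinal.{0}) : Set ℕ :=
  jumpIter C (hLevel α)

/-- `X` is `Δ⁰_α` relative to `C`. -/
def DeltaIn (X : Set ℕ) (α : Ordinal.{0}) (C : Set ℕ) : Prop :=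
  TR X (deltaComplete C α)

/-- `X` is `Σ⁰_α` relative to `C`, i.e. c.e. in a `Δ⁰_α(C)`-complete set. -/
def SigmaIn (X : Set ℕ) (α : Ordinal.{0}) (C : Set ℕ) : Prop :=
  CEIn X (deltaComplete C α)

/-- An ordinal is computable if it is at most the order type of a computable
well-order on ℕ. -/
def IsComputableOrdinal (α : Ordinal.{0}) : Prop :=
  ∃ r : ℕ → ℕ → Prop, (∃ h : IsWellOrder ℕ r, α ≤ @Ordinal.type ℕ r h) ∧
    ComputableSet {n | r n.unpair.1 n.unpair.2}

/-- An ordinal is countable. -/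
def IsCountableOrdinal (α : Ordinal.{0}) : Prop := α.card ≤ Cardinal.aleph0

open FirstOrder FirstOrder.Language

variable (L : FirstOrder.Language.{0, 0})

/-- A Gödel number for a (bounded) formula over an encodable language. -/
def gnum [∀ i, Encodable (L.Functions i)] [∀ i, Encodable (L.Relations i)]
    {α : Type} [Encodable α] {n : ℕ} (φ : L.BoundedFormula α n) : ℕ :=
  Encodable.encode φ.listEncode

/-- The atomic diagram of a structure on ℕ: the set of Gödel numbers of atomic and
negated atomic sentences with parameters from ℕ which are true in the structure. -/
def atomicDiagram [∀ i, Encodable (L.Functions i)] [∀ i, Encodable (L.Relations i)]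
    (SA : L.Structure ℕ) : Set ℕ :=
  { n | ∃ φ : L.Formula ℕ,
      (φ.IsAtomic ∨ ∃ ψ : L.Formula ℕ, ψ.IsAtomic ∧ φ = ψ.not) ∧
      n = gnum L φ ∧ @Formula.Realize L ℕ SA ℕ φ id }

/-- Isomorphisms between two structures on ℕ. -/
def SIso (SA SB : L.Structure ℕ) : Type := @FirstOrder.Language.Equiv L ℕ ℕ SA SB

/-- The underlying function `ℕ → ℕ` of an isomorphism. -/
def SIso.fn {SA SB : L.Structure ℕ} (g : SIso L SA SB) : ℕ → ℕ :=
  (@FirstOrder.Language.Equiv.toEquiv L ℕ ℕ SA SB g : ℕ → ℕ)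

/-- `SB` is a copy of (i.e. is isomorphic to) `SA`. -/
def Copies (SA SB : L.Structure ℕ) : Prop := Nonempty (SIso L SA SB)

section Enc

variable [∀ i, Encodable (L.Functions i)] [∀ i, Encodable (L.Relations i)]

/-- The structure `SB` is computable in the degree (represented by) `C`. -/
def CComputable (SB : L.Structure ℕ) (C : Set ℕ) : Prop :=
  TR (atomicDiagram L SB) C

/-- `D` computes an isomorphism between `SB` and `SC`. -/
def ComputesIso (D : Set ℕ) (SB SC : L.Structure ℕ) : Prop :=
  ∃ g : SIso L SB SC, FRecIn (SIso.fn L g) D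

/-- `D` computes an isomorphism between any two `C`-computable copies of `SA`. -/
def ComputesIsosOver (SA : L.Structure ℕ) (C D : Set ℕ) : Prop :=
  ∀ SB SC : L.Structure ℕ, Copies L SA SB → Copies L SA SC →
    CComputable L SB C → CComputable L SC C → ComputesIso L D SB SC

/-- `D` is the degree of categoricity of `SA` relative to `C`. -/
def IsDegreeOfCategoricity (SA : L.Structure ℕ) (C D : Set ℕ) : Prop :=
  TR C D ∧ ComputesIsosOver L SA C D ∧
    ∀ D' : Set ℕ, TR C D' → ComputesIsosOver L SA C D' → TR D D'

/-- `D` is a strong degree of categoricity of `SA` relative to `C`. -/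
def IsStrongDegreeOfCategoricity (SA : L.Structure ℕ) (C D : Set ℕ) : Prop :=
  IsDegreeOfCategoricity L SA C D ∧
    ∃ SB SC : L.Structure ℕ, Copies L SA SB ∧ Copies L SA SC ∧
      CComputable L SB C ∧ CComputable L SC C ∧
      ∀ g : SIso L SB SC, TR D (join (fgraph (SIso.fn L g)) C)

/-- `SA` is `Δ⁰_α` categorical on the cone above `D`. -/
def DeltaCatAbove (SA : L.Structure ℕ) (α : Ordinal.{0}) (D : Set ℕ) : Prop :=
  ∀ C : Set ℕ, TR D C →
    ∀ SB SC : L.Structure ℕ, Copies L SA SB → Copies L SA SC →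
      CComputable L SB C → CComputable L SC C →
        ∃ g : SIso L SB SC, DeltaIn (fgraph (SIso.fn L g)) α C

/-- `SA` is computably categorical on the cone above `D`. -/
def CompCatAbove (SA : L.Structure ℕ) (D : Set ℕ) : Prop :=
  ∀ C : Set ℕ, TR D C →
    ∀ SB SC : L.Structure ℕ, Copies L SA SB → Copies L SA SC →
      CComputable L SB C → CComputable L SC C →
        ∃ g : SIso L SB SC, FRecIn (SIso.fn L g) C

end Enc

/-- The standard back-and-forth relations `≤_α` on tuples from a structure on ℕ. -/
noncomputable def bf [∀ i, Encodable (L.Functions i)] [∀ i, Encodable (L.Relations i)]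
    (SA : L.Structure ℕ) : Ordinal.{0} → List ℕ → List ℕ → Prop :=
  WellFounded.fix Ordinal.lt_wf (fun o ih a b =>
    a.length = b.length ∧
      if o = 0 then
        ∀ φ : L.Formula (Fin a.length), φ.IsQF → gnum L φ < a.length →
          @FirstOrder.Language.Formula.Realize L ℕ SA (Fin a.length) φ (fun i => a.getD (i : ℕ) 0) →
          @FirstOrder.Language.Formula.Realize L ℕ SA (Fin a.length) φ (fun i => b.getD (i : ℕ) 0)
      else
        ∀ β (hβ : β < o), ∀ d : List ℕ, ∃ c : List ℕ, c.length = d.length ∧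
          ih β hβ (b ++ d) (a ++ c))

/-- The tuple `abar` is `α`-free over `cbar` in the structure `SA`. -/
noncomputable def AlphaFree [∀ i, Encodable (L.Functions i)] [∀ i, Encodable (L.Relations i)]
    (SA : L.Structure ℕ) (α : Ordinal.{0}) (abar cbar : List ℕ) : Prop :=
  ∀ a1 : List ℕ, ∀ β < α, ∃ a' a1' : List ℕ,
    a'.length = abar.length ∧ a1'.length = a1.length ∧
    bf L SA β (cbar ++ abar ++ a1) (cbar ++ a' ++ a1') ∧
    ¬ bf L SA α (cbar ++ a') (cbar ++ abar)



section BFLemmas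
open FirstOrder FirstOrder.Language

variable (L : FirstOrder.Language.{0,0}) [∀ i, Encodable (L.Functions i)]
  [∀ i, Encodable (L.Relations i)] (SA : L.Structure ℕ)

theorem bf_iff (o : Ordinal.{0}) (a b : List ℕ) :
    bf L SA o a b ↔ (a.length = b.length ∧
      if o = 0 then
        ∀ φ : L.Formula (Fin a.length), φ.IsQF → gnum L φ < a.length →
          @FirstOrder.Language.Formula.Realize L ℕ SA (Fin a.length) φ (fun i => a.getD (i : ℕ) 0) →
          @FirstOrder.Language.Formula.Realize L ℕ SA (Fin a.length) φ (fun i => b.getD (i : ℕ) 0)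
      else
        ∀ β (_ : β < o), ∀ d : List ℕ, ∃ c : List ℕ, c.length = d.length ∧
          bf L SA β (b ++ d) (a ++ c)) := by
  unfold bf
  rw [WellFounded.fix_eq]

theorem bf_length {o : Ordinal.{0}} {a b : List ℕ} (h : bf L SA o a b) :
    a.length = b.length := ((bf_iff L SA o a b).1 h).1

theorem bf_zero_iff (a b : List ℕ) :
    bf L SA 0 a b ↔ (a.length = b.length ∧
      ∀ φ : L.Formula (Fin a.length), φ.IsQF → gnum L φ < a.length →
        @FirstOrder.Language.Formula.Realize L ℕ SA (Fin a.length) φ (fun i => a.getD (i : ℕ) 0) →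
        @FirstOrder.Language.Formula.Realize L ℕ SA (Fin a.length) φ (fun i => b.getD (i : ℕ) 0)) := by
  rw [bf_iff, if_pos rfl]

theorem bf_pos_iff {o : Ordinal.{0}} (ho : o ≠ 0) (a b : List ℕ) :
    bf L SA o a b ↔ (a.length = b.length ∧
      ∀ β (_ : β < o), ∀ d : List ℕ, ∃ c : List ℕ, c.length = d.length ∧
        bf L SA β (b ++ d) (a ++ c)) := by
  rw [bf_iff, if_neg ho]

theorem bf_refl (o : Ordinal.{0}) (a : List ℕ) : bf L SA o a a := by
  induction o using Ordinal.induction generalizing a with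
  | _ o ih =>
    rcases eq_or_ne o 0 with rfl | ho
    · exact (bf_zero_iff L SA a a).2 ⟨rfl, fun φ _ _ h => h⟩
    · exact (bf_pos_iff L SA ho a a).2 ⟨rfl, fun β hβ d => ⟨d, rfl, ih β hβ _⟩⟩

theorem bf_trans {o : Ordinal.{0}} {a b c : List ℕ} (h₁ : bf L SA o a b)
    (h₂ : bf L SA o b c) : bf L SA o a c := by
  induction o using Ordinal.induction generalizing a b c with
  | _ o ih =>
    rcases eq_or_ne o 0 with rfl | ho
    · obtain ⟨l₁, H₁⟩ := (bf_zero_iff L SA a b).1 h₁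
      obtain ⟨l₂, H₂⟩ := (bf_zero_iff L SA b c).1 h₂
      refine (bf_zero_iff L SA a c).2 ⟨l₁.trans l₂, fun φ hqf hg hr => ?_⟩
      rw [← l₁] at H₂
      exact H₂ φ hqf hg (H₁ φ hqf hg hr)
    · obtain ⟨l₁, H₁⟩ := (bf_pos_iff L SA ho a b).1 h₁
      obtain ⟨l₂, H₂⟩ := (bf_pos_iff L SA ho b c).1 h₂
      refine (bf_pos_iff L SA ho a c).2 ⟨l₁.trans l₂, fun β hβ d => ?_⟩
      obtain ⟨e₁, he₁, hbf₁⟩ := H₂ β hβ d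
      obtain ⟨e₂, he₂, hbf₂⟩ := H₁ β hβ e₁
      exact ⟨e₂, he₂.trans he₁, ih β hβ hbf₁ hbf₂⟩

theorem bf_mono_pos {β o : Ordinal.{0}} (hβ : β ≠ 0) (hle : β ≤ o) {a b : List ℕ}
    (h : bf L SA o a b) : bf L SA β a b := by
  rcases eq_or_lt_of_le hle with rfl | hlt
  · exact h
  · have ho : o ≠ 0 := fun h0 => by simp [h0] at hlt
    obtain ⟨l, H⟩ := (bf_pos_iff L SA ho a b).1 h
    exact (bf_pos_iff L SA hβ a b).2 ⟨l, fun γ hγ d => H γ (hγ.trans hlt) d⟩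

theorem bf_rev {β o : Ordinal.{0}} (hβ : β < o) {a b : List ℕ}
    (h : bf L SA o a b) : bf L SA β b a := by
  have ho : o ≠ 0 := fun h0 => by subst h0; exact absurd hβ not_lt_zero
  obtain ⟨l, H⟩ := (bf_pos_iff L SA ho a b).1 h
  obtain ⟨c, hc, hbf⟩ := H β hβ []
  have hc' : c = [] := by simpa using hc
  subst hc'
  simpa using hbf

end BFLemmas

section Frel
open FirstOrder FirstOrder.Language

variable {L : FirstOrder.Language.{0,0}}

/-- A depth-preserving relabeling of bounded formulas. -/
def frel {α β : Type} (g : α → β) : ∀ {k}, L.BoundedFormula α k → L.BoundedFormula β k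
  | _, .falsum => .falsum
  | _, .equal t₁ t₂ => .equal (t₁.relabel (Sum.map g id)) (t₂.relabel (Sum.map g id))
  | _, .rel R ts => .rel R (fun i => (ts i).relabel (Sum.map g id))
  | _, .imp φ ψ => .imp (frel g φ) (frel g ψ)
  | _, .all φ => .all (frel g φ)

theorem frel_isQF {α β : Type} (g : α → β) : ∀ {k} {φ : L.BoundedFormula α k},
    φ.IsQF → (frel g φ).IsQF := by
  intro k φ h
  induction h with
  | falsum => exact BoundedFormula.isQF_bot
  | of_isAtomic h =>
    cases h with
    | equal t₁ t₂ => exact (BoundedFormula.IsAtomic.equal _ _).isQF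
    | rel R ts => exact (BoundedFormula.IsAtomic.rel R _).isQF
  | imp _ _ ih₁ ih₂ => exact ih₁.imp ih₂

theorem frel_realize {M : Type} [L.Structure M] {α β : Type} (g : α → β) :
    ∀ {k} (φ : L.BoundedFormula α k) (v : β → M) (xs : Fin k → M),
      (frel g φ).Realize v xs ↔ φ.Realize (v ∘ g) xs := by
  intro k φ
  induction φ with
  | falsum => intro v xs; rfl
  | equal t₁ t₂ =>
    intro v xs
    simp only [frel, BoundedFormula.Realize, Term.realize_relabel]
    rw [Sum.elim_comp_map]
    simp
  | rel R ts =>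
    intro v xs
    simp only [frel, BoundedFormula.Realize, Term.realize_relabel]
    rw [Sum.elim_comp_map]
    simp
  | imp φ ψ ih₁ ih₂ =>
    intro v xs
    simp only [frel, BoundedFormula.realize_imp, ih₁, ih₂]
  | all φ ih =>
    intro v xs
    simp only [frel, BoundedFormula.realize_all, ih]

theorem frel_realize_formula {M : Type} [L.Structure M] {α β : Type} (g : α → β)
    (φ : L.Formula α) (v : β → M) :
    Formula.Realize (M := M) (frel g φ) v ↔ Formula.Realize φ (v ∘ g) :=
  frel_realize g φ v default

end Frel

set_option linter.unusedSectionVars false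
section GnumCongr
open FirstOrder FirstOrder.Language Encodable

theorem fin_encode {n : ℕ} (i : Fin n) : Encodable.encode i = (i : ℕ) := by
  rw [show (Fin.encodable n) = Encodable.ofEquiv _ Fin.equivSubtype from rfl,
    Encodable.encode_ofEquiv, Subtype.encode_eq]
  exact Encodable.encode_nat _

theorem encode_list_congr {X Y : Type} [Encodable X] [Encodable Y] :
    ∀ {l₁ : List X} {l₂ : List Y},
      List.Forall₂ (fun x y => Encodable.encode x = Encodable.encode y) l₁ l₂ →
      Encodable.encode l₁ = Encodable.encode l₂ := by
  intro l₁ l₂ h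
  induction h with
  | nil => rfl
  | cons h _ ih => rw [Encodable.encode_list_cons, Encodable.encode_list_cons, h, ih]

theorem forall₂_map {I X Y : Type} {R : X → Y → Prop} (F : I → X) (G : I → Y) :
    ∀ (l : List I), (∀ i ∈ l, R (F i) (G i)) → List.Forall₂ R (l.map F) (l.map G) := by
  intro l
  induction l with
  | nil => intro _; exact List.Forall₂.nil
  | cons a l ih =>
    intro h
    exact List.Forall₂.cons (h a (by simp)) (ih fun i hi => h i (by simp [hi]))

theorem forall₂_flatMap {I X Y : Type} {R : X → Y → Prop} (F : I → List X) (G : I → List Y) :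
    ∀ (l : List I), (∀ i ∈ l, List.Forall₂ R (F i) (G i)) →
      List.Forall₂ R (l.flatMap F) (l.flatMap G) := by
  intro l
  induction l with
  | nil => intro _; simp [List.flatMap]
  | cons a l ih =>
    intro h
    rw [List.flatMap_cons, List.flatMap_cons]
    exact List.rel_append (h a (by simp)) (ih fun i hi => h i (by simp [hi]))

variable {L : FirstOrder.Language.{0,0}} [∀ i, Encodable (L.Functions i)]
  [∀ i, Encodable (L.Relations i)]

theorem term_encode_eq {γ : Type} [Encodable γ] (t : L.Term γ) :
    Encodable.encode t = Encodable.encode t.listEncode := rfl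

theorem term_listEncode_congr {a b b' : ℕ} (g : Fin a → Fin b) (g' : Fin a → Fin b')
    (hg : ∀ i, ((g i : ℕ)) = ((g' i : ℕ))) {k : ℕ} :
    ∀ t : L.Term (Fin a ⊕ Fin k),
      List.Forall₂ (fun x y => Encodable.encode x = Encodable.encode y)
        (t.relabel (Sum.map g id)).listEncode (t.relabel (Sum.map g' id)).listEncode := by
  intro t
  induction t with
  | var v =>
    refine List.Forall₂.cons ?_ List.Forall₂.nil
    cases v with
    | inl i =>
      simp only [Term.relabel, Sum.map_inl, Term.listEncode]
      simp only [Encodable.encode_inl, fin_encode]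
      rw [hg]
    | inr j =>
      simp only [Term.relabel, Sum.map_inr, Term.listEncode]
      simp only [Encodable.encode_inl, Encodable.encode_inr]
  | func f ts ih =>
    simp only [Term.relabel, Term.listEncode]
    refine List.Forall₂.cons ?_ ?_
    · simp only [Encodable.encode_inr]
    · exact forall₂_flatMap _ _ _ (fun i _ => ih i)

theorem formula_listEncode_congr {a b b' : ℕ} (g : Fin a → Fin b) (g' : Fin a → Fin b')
    (hg : ∀ i, ((g i : ℕ)) = ((g' i : ℕ))) :
    ∀ {k} (φ : L.BoundedFormula (Fin a) k),
      List.Forall₂ (fun x y => Encodable.encode x = Encodable.encode y)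
        (frel g φ).listEncode (frel g' φ).listEncode := by
  intro k φ
  induction φ with
  | falsum =>
    simp only [frel, BoundedFormula.listEncode]
    refine List.Forall₂.cons ?_ List.Forall₂.nil
    simp only [Encodable.encode_inr]
  | equal t₁ t₂ =>
    simp only [frel, BoundedFormula.listEncode]
    refine List.Forall₂.cons ?_ (List.Forall₂.cons ?_ List.Forall₂.nil) <;>
    · simp only [Encodable.encode_inl, Encodable.encode_sigma_val, term_encode_eq]
      rw [encode_list_congr (term_listEncode_congr g g' hg _)]
  | rel R ts =>
    simp only [frel, BoundedFormula.listEncode]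
    refine List.rel_append (List.Forall₂.cons ?_ (List.Forall₂.cons ?_ List.Forall₂.nil)) ?_
    · simp only [Encodable.encode_inr]
    · simp only [Encodable.encode_inr]
    · refine forall₂_map _ _ _ (fun i _ => ?_)
      simp only [Encodable.encode_inl, Encodable.encode_sigma_val, term_encode_eq]
      rw [encode_list_congr (term_listEncode_congr g g' hg _)]
  | imp φ ψ ih₁ ih₂ =>
    simp only [frel, BoundedFormula.listEncode]
    exact List.rel_append (List.Forall₂.cons (by simp only [Encodable.encode_inr]) ih₁) ih₂
  | all φ ih =>
    simp only [frel, BoundedFormula.listEncode]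
    exact List.Forall₂.cons (by simp only [Encodable.encode_inr]) ih

theorem gnum_frel_congr {a b b' : ℕ} (g : Fin a → Fin b) (g' : Fin a → Fin b')
    (hg : ∀ i, ((g i : ℕ)) = ((g' i : ℕ))) (φ : L.Formula (Fin a)) :
    gnum L (frel g φ) = gnum L (frel g' φ) :=
  encode_list_congr (formula_listEncode_congr g g' hg φ)

theorem gnum_injective {n : ℕ} : Function.Injective (fun φ : L.Formula (Fin n) => gnum L φ) := by
  intro φ ψ h
  have h2 : φ.listEncode = ψ.listEncode := Encodable.encode_injective h
  have h3 := BoundedFormula.listEncode_sigma_injective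
    (α := Fin n) (L := L) (a₁ := ⟨0, φ⟩) (a₂ := ⟨0, ψ⟩) h2
  exact eq_of_heq (Sigma.mk.inj_iff.1 h3).2

end GnumCongr

section Pad
open FirstOrder FirstOrder.Language

theorem getD_mid (x m y : List ℕ) (i : ℕ) :
    (x ++ (m ++ y)).getD (if i < x.length then i else i + m.length) 0
      = (x ++ y).getD i 0 := by
  split
  · next h =>
    rw [List.getD_append _ _ _ _ (by simpa using (Nat.lt_of_lt_of_le h (by simp))),
      List.getD_append _ _ _ _ h]
  · next h =>
    push_neg at h
    rw [List.getD_append_right _ _ _ _ (by omega),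
      List.getD_append_right _ _ _ _ (by omega),
      List.getD_append_right _ _ _ _ (by omega)]
    congr 1
    omega

variable (L : FirstOrder.Language.{0,0}) [∀ i, Encodable (L.Functions i)]
  [∀ i, Encodable (L.Relations i)] (SA : L.Structure ℕ)

theorem pad0 (x m y x' m' y' : List ℕ) (hx : x.length = x'.length)
    (hm : m.length = m'.length) (hy : y.length = y'.length)
    (H : ∀ D : List ℕ, ∃ C, C.length = D.length ∧
      bf L SA 0 (x' ++ (m' ++ (y' ++ D))) (x ++ (m ++ (y ++ C))))
    (d : List ℕ) :
    ∃ c, c.length = d.length ∧ bf L SA 0 (x' ++ (y' ++ d)) (x ++ (y ++ c)) := by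
  letI : L.Structure ℕ := SA
  classical
  set n := (x' ++ (y' ++ d)).length with hn
  have hn' : n = x'.length + (y'.length + d.length) := by simp [hn]
  have hι₀ : ∀ i : Fin n, (if (i : ℕ) < x'.length then (i : ℕ) else (i : ℕ) + m'.length)
      < n + m'.length := by
    intro i
    have := i.2
    split <;> omega
  let g₀ : Fin n → Fin (n + m'.length) := fun i => ⟨_, hι₀ i⟩
  let inj : {φ : L.Formula (Fin n) // gnum L φ < n} → Fin n := fun φ => ⟨gnum L φ.1, φ.2⟩
  have hinj : Function.Injective inj := by
    intro φ ψ h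
    have : gnum L φ.1 = gnum L ψ.1 := congrArg Fin.val h
    exact Subtype.ext (gnum_injective this)
  letI : Fintype {φ : L.Formula (Fin n) // gnum L φ < n} := Fintype.ofInjective inj hinj
  set ℓ : ℕ := (Finset.univ.sup fun φ : {φ : L.Formula (Fin n) // gnum L φ < n} =>
    gnum L (frel g₀ φ.1)) + 1 with hℓ
  obtain ⟨C, hClen, hC⟩ := H (d ++ List.replicate ℓ 0)
  have hClen' : C.length = d.length + ℓ := by simpa using hClen
  refine ⟨C.take d.length, by rw [List.length_take, hClen']; omega, ?_⟩
  rw [bf_zero_iff]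
  have hlen2 : (x' ++ (y' ++ d)).length = (x ++ (y ++ C.take d.length)).length := by
    simp only [List.length_append, List.length_take, hClen', hx, hy]
    omega
  refine ⟨hlen2, ?_⟩
  intro φ hqf hgnum hreal
  obtain ⟨hClen0, H0⟩ := (bf_zero_iff L SA _ _).1 hC
  have hA'len : (x' ++ (m' ++ (y' ++ (d ++ List.replicate ℓ 0)))).length
      = n + m'.length + ℓ := by
    simp only [List.length_append, List.length_replicate, hn']
    omega
  have hι₁ : ∀ i : Fin n, (if (i : ℕ) < x'.length then (i : ℕ) else (i : ℕ) + m'.length)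
      < (x' ++ (m' ++ (y' ++ (d ++ List.replicate ℓ 0)))).length := by
    intro i
    have := i.2
    rw [hA'len]
    split <;> omega
  let g₁ : Fin n → Fin (x' ++ (m' ++ (y' ++ (d ++ List.replicate ℓ 0)))).length :=
    fun i => ⟨_, hι₁ i⟩
  have hgn : gnum L (frel g₁ φ) = gnum L (frel g₀ φ) :=
    gnum_frel_congr g₁ g₀ (fun i => rfl) φ
  have hlt : gnum L (frel g₁ φ) < (x' ++ (m' ++ (y' ++ (d ++ List.replicate ℓ 0)))).length := by
    rw [hgn, hA'len]
    have hb := Finset.le_sup (f := fun φ : {φ : L.Formula (Fin n) // gnum L φ < n} =>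
      gnum L (frel g₀ φ.1)) (Finset.mem_univ ⟨φ, hgnum⟩)
    have hb' : gnum L (frel g₀ φ) ≤ Finset.univ.sup (fun φ : {φ : L.Formula (Fin n) //
      gnum L φ < n} => gnum L (frel g₀ φ.1)) := hb
    omega
  have hvall : ((fun j : Fin (x' ++ (m' ++ (y' ++ (d ++ List.replicate ℓ 0)))).length =>
      (x' ++ (m' ++ (y' ++ (d ++ List.replicate ℓ 0)))).getD (j : ℕ) 0) ∘ g₁)
      = fun i : Fin n => (x' ++ (y' ++ d)).getD (i : ℕ) 0 := by
    funext i
    show (x' ++ (m' ++ (y' ++ (d ++ List.replicate ℓ 0)))).getD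
      (if (i : ℕ) < x'.length then (i : ℕ) else (i : ℕ) + m'.length) 0
      = (x' ++ (y' ++ d)).getD (i : ℕ) 0
    have e0 : y' ++ (d ++ List.replicate ℓ 0) = (y' ++ d) ++ List.replicate ℓ 0 :=
      (List.append_assoc _ _ _).symm
    rw [e0, getD_mid x' m' ((y' ++ d) ++ List.replicate ℓ 0) (i : ℕ)]
    have e1 : x' ++ ((y' ++ d) ++ List.replicate ℓ 0)
        = (x' ++ (y' ++ d)) ++ List.replicate ℓ 0 := by
      simp [List.append_assoc]
    rw [e1]
    exact List.getD_append _ _ _ _ (by rw [← hn]; exact i.2)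
  have h1 : Formula.Realize (M := ℕ) (frel g₁ φ)
      (fun j => (x' ++ (m' ++ (y' ++ (d ++ List.replicate ℓ 0)))).getD (j : ℕ) 0) := by
    rw [frel_realize_formula, hvall]
    exact hreal
  have h2 := H0 (frel g₁ φ) (frel_isQF _ hqf) hlt h1
  rw [frel_realize_formula] at h2
  have hvalr : ((fun j : Fin (x' ++ (m' ++ (y' ++ (d ++ List.replicate ℓ 0)))).length =>
      (x ++ (m ++ (y ++ C))).getD (j : ℕ) 0) ∘ g₁)
      = fun i : Fin n => (x ++ (y ++ C.take d.length)).getD (i : ℕ) 0 := by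
    funext i
    show (x ++ (m ++ (y ++ C))).getD
      (if (i : ℕ) < x'.length then (i : ℕ) else (i : ℕ) + m'.length) 0
      = (x ++ (y ++ C.take d.length)).getD (i : ℕ) 0
    rw [← hx, ← hm]
    have hsplit : y ++ C = (y ++ C.take d.length) ++ C.drop d.length := by
      rw [List.append_assoc, List.take_append_drop]
    rw [hsplit, getD_mid x m ((y ++ C.take d.length) ++ C.drop d.length) (i : ℕ)]
    have e1 : x ++ ((y ++ C.take d.length) ++ C.drop d.length)
        = (x ++ (y ++ C.take d.length)) ++ C.drop d.length := by
      simp [List.append_assoc]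
    rw [e1]
    refine List.getD_append _ _ _ _ ?_
    have h2 := i.2
    simp only [List.length_append, List.length_take, hClen']
    omega
  rw [hvalr] at h2
  exact h2

theorem bf_zero_of_pos {o : Ordinal.{0}} (ho : o ≠ 0) {a b : List ℕ}
    (h : bf L SA o a b) : bf L SA 0 a b := by
  letI : L.Structure ℕ := SA
  have hlen := bf_length L SA h
  rw [bf_zero_iff]
  refine ⟨hlen, fun φ hqf hgn hreal => ?_⟩
  by_contra hnot
  have hnr : Formula.Realize (M := ℕ) φ.not (fun i : Fin a.length => b.getD (i : ℕ) 0) :=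
    Formula.realize_not.2 hnot
  let g₀ : Fin a.length → Fin a.length := fun i => i
  obtain ⟨C, hClen, hbf0⟩ := ((bf_pos_iff L SA ho a b).1 h).2 0
    (pos_iff_ne_zero.2 ho) (List.replicate (gnum L (frel g₀ φ.not) + 1) 0)
  have hblen : (b ++ List.replicate (gnum L (frel g₀ φ.not) + 1) 0).length
      = a.length + (gnum L (frel g₀ φ.not) + 1) := by
    simp [hlen]
  have hι : ∀ i : Fin a.length,
      (i : ℕ) < (b ++ List.replicate (gnum L (frel g₀ φ.not) + 1) 0).length := by
    intro i
    rw [hblen]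
    have := i.2
    omega
  let g₁ : Fin a.length → Fin (b ++ List.replicate (gnum L (frel g₀ φ.not) + 1) 0).length :=
    fun i => ⟨(i : ℕ), hι i⟩
  have hgn1 : gnum L (frel g₁ φ.not) = gnum L (frel g₀ φ.not) :=
    gnum_frel_congr g₁ g₀ (fun i => rfl) _
  obtain ⟨hlen0, H0⟩ := (bf_zero_iff L SA _ _).1 hbf0
  have hlt : gnum L (frel g₁ φ.not)
      < (b ++ List.replicate (gnum L (frel g₀ φ.not) + 1) 0).length := by
    rw [hgn1, hblen]
    omega
  have hv1 : ((fun j : Fin (b ++ List.replicate (gnum L (frel g₀ φ.not) + 1) 0).length =>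
      (b ++ List.replicate (gnum L (frel g₀ φ.not) + 1) 0).getD (j : ℕ) 0) ∘ g₁)
      = fun i : Fin a.length => b.getD (i : ℕ) 0 := by
    funext i
    exact List.getD_append _ _ _ _ (by rw [← hlen]; exact i.2)
  have h1 : Formula.Realize (M := ℕ) (frel g₁ φ.not)
      (fun j => (b ++ List.replicate (gnum L (frel g₀ φ.not) + 1) 0).getD (j : ℕ) 0) := by
    rw [frel_realize_formula, hv1]
    exact hnr
  have h2 := H0 (frel g₁ φ.not) (frel_isQF _ hqf.not) hlt h1
  rw [frel_realize_formula] at h2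
  have hv2 : ((fun j : Fin (b ++ List.replicate (gnum L (frel g₀ φ.not) + 1) 0).length =>
      (a ++ C).getD (j : ℕ) 0) ∘ g₁) = fun i : Fin a.length => a.getD (i : ℕ) 0 := by
    funext i
    exact List.getD_append _ _ _ _ i.2
  rw [hv2] at h2
  exact Formula.realize_not.1 h2 hreal

theorem bf_mono {β o : Ordinal.{0}} (hle : β ≤ o) {a b : List ℕ}
    (h : bf L SA o a b) : bf L SA β a b := by
  rcases eq_or_ne β 0 with rfl | hβ
  · rcases eq_or_ne o 0 with rfl | ho
    · exact h
    · exact bf_zero_of_pos L SA ho h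
  · exact bf_mono_pos L SA hβ hle h

end Pad

section Star
open FirstOrder FirstOrder.Language

variable (L : FirstOrder.Language.{0,0}) [∀ i, Encodable (L.Functions i)]
  [∀ i, Encodable (L.Relations i)] (SA : L.Structure ℕ)

theorem bf_star (o : Ordinal.{0}) : ∀ (x m y x' m' y' : List ℕ),
    x.length = x'.length → m.length = m'.length → y.length = y'.length →
    (∀ D : List ℕ, ∃ C, C.length = D.length ∧
      bf L SA o (x' ++ (m' ++ (y' ++ D))) (x ++ (m ++ (y ++ C)))) →
    ∀ d, ∃ c, c.length = d.length ∧ bf L SA o (x' ++ (y' ++ d)) (x ++ (y ++ c)) := by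
  induction o using Ordinal.induction with
  | _ o ih =>
    intro x m y x' m' y' hx hm hy H d
    rcases eq_or_ne o 0 with rfl | ho
    · exact pad0 L SA x m y x' m' y' hx hm hy H d
    · obtain ⟨C, hClen, hC⟩ := H d
      refine ⟨C, hClen, ?_⟩
      rw [bf_pos_iff L SA ho]
      constructor
      · simp only [List.length_append]
        omega
      · intro β hβ e
        obtain ⟨lenC, HC⟩ := (bf_pos_iff L SA ho _ _).1 hC
        have H₂ : ∀ D : List ℕ, ∃ F, F.length = D.length ∧
            bf L SA β (x ++ (m ++ ((y ++ C) ++ D))) (x' ++ (m' ++ ((y' ++ d) ++ F))) := by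
          intro D
          obtain ⟨F, hF, hbf⟩ := HC β hβ D
          refine ⟨F, hF, ?_⟩
          have e₁ : (x ++ (m ++ (y ++ C))) ++ D = x ++ (m ++ ((y ++ C) ++ D)) := by
            simp [List.append_assoc]
          have e₂ : (x' ++ (m' ++ (y' ++ d))) ++ F = x' ++ (m' ++ ((y' ++ d) ++ F)) := by
            simp [List.append_assoc]
          rw [e₁, e₂] at hbf
          exact hbf
        obtain ⟨f, hf, hbf⟩ := ih β hβ x' m' (y' ++ d) x m (y ++ C) hx.symm hm.symm
          (by simp only [List.length_append]; omega) H₂ e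
        refine ⟨f, hf, ?_⟩
        have e₃ : x ++ ((y ++ C) ++ e) = (x ++ (y ++ C)) ++ e := by simp [List.append_assoc]
        have e₄ : x' ++ ((y' ++ d) ++ f) = (x' ++ (y' ++ d)) ++ f := by simp [List.append_assoc]
        rw [e₃, e₄] at hbf
        exact hbf

theorem bf_removeMid {o : Ordinal.{0}} (ho : o ≠ 0) {x m y x' m' y' : List ℕ}
    (hx : x.length = x'.length) (hm : m.length = m'.length)
    (h : bf L SA o (x ++ (m ++ y)) (x' ++ (m' ++ y'))) : bf L SA o (x ++ y) (x' ++ y') := by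
  have hlen := bf_length L SA h
  simp only [List.length_append] at hlen
  rw [bf_pos_iff L SA ho]
  constructor
  · simp only [List.length_append]
    omega
  · intro β hβ d
    obtain ⟨_, H⟩ := (bf_pos_iff L SA ho _ _).1 h
    have H₂ : ∀ D : List ℕ, ∃ C, C.length = D.length ∧
        bf L SA β (x' ++ (m' ++ (y' ++ D))) (x ++ (m ++ (y ++ C))) := by
      intro D
      obtain ⟨C, hC, hbf⟩ := H β hβ D
      refine ⟨C, hC, ?_⟩
      have e₁ : (x' ++ (m' ++ y')) ++ D = x' ++ (m' ++ (y' ++ D)) := by simp [List.append_assoc]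
      have e₂ : (x ++ (m ++ y)) ++ C = x ++ (m ++ (y ++ C)) := by simp [List.append_assoc]
      rw [e₁, e₂] at hbf
      exact hbf
    obtain ⟨c, hc, hbf⟩ := bf_star L SA β x m y x' m' y' hx hm (by omega) H₂ d
    refine ⟨c, hc, ?_⟩
    have e₃ : x' ++ (y' ++ d) = (x' ++ y') ++ d := by simp [List.append_assoc]
    have e₄ : x ++ (y ++ c) = (x ++ y) ++ c := by simp [List.append_assoc]
    rw [e₃, e₄] at hbf
    exact hbf

end Star

/-- (First claim in the proof of the extendability condition.)
Given ordinals `ξ₀ < ⋯ < ξ_{k-1}` and tuples `q_k, …, q₀` of nondecreasing lengths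
with `q_{i+1} ≤_{ξ_i + 1} q_i ↾ |q_{i+1}|` for each `i < k`, there is a tuple `p` of
length `|q₀|` extending `q_k` with `q_i ≤_{ξ_i} p ↾ |q_i|` for all `i < k`. -/
theorem amalgamation_of_back_and_forth_conditions
    (L : FirstOrder.Language.{0, 0}) [∀ i, Encodable (L.Functions i)]
    [∀ i, Encodable (L.Relations i)] (SA : L.Structure ℕ)
    (k : ℕ) (ξ : Fin k → Ordinal.{0}) (hmono : StrictMono ξ)
    (q : Fin (k + 1) → List ℕ)
    (hlen : ∀ i : Fin k, (q i.succ).length ≤ (q i.castSucc).length)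
    (hbf : ∀ i : Fin k, bf L SA (ξ i + 1) (q i.succ) ((q i.castSucc).take (q i.succ).length)) :
    ∃ p : List ℕ, p.length = (q 0).length ∧
      p.take (q (Fin.last k)).length = q (Fin.last k) ∧
      ∀ i : Fin k, bf L SA (ξ i) (q i.castSucc) (p.take (q i.castSucc).length) := by
  classical
  -- ℕ-indexed versions of the data
  set Q : ℕ → List ℕ := fun i => if h : i < k + 1 then q ⟨i, h⟩ else [] with hQdef
  set Ξ : ℕ → Ordinal.{0} := fun i => if h : i < k then ξ ⟨i, h⟩ else 0 with hΞdef
  have hQ : ∀ (i : ℕ) (h : i < k + 1), Q i = q ⟨i, h⟩ := by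
    intro i h; simp only [hQdef, dif_pos h]
  have hΞ : ∀ (i : ℕ) (h : i < k), Ξ i = ξ ⟨i, h⟩ := by
    intro i h; simp only [hΞdef, dif_pos h]
  have hQc : ∀ i : Fin k, q i.castSucc = Q (i : ℕ) := by
    intro i
    rw [hQ (i : ℕ) (by omega)]
    exact congrArg q (Fin.ext rfl)
  have hQs : ∀ i : Fin k, q i.succ = Q ((i : ℕ) + 1) := by
    intro i
    rw [hQ ((i : ℕ) + 1) (by omega)]
    exact congrArg q (Fin.ext rfl)
  have hΞc : ∀ i : Fin k, ξ i = Ξ (i : ℕ) := by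
    intro i
    rw [hΞ (i : ℕ) i.2]
  have hQ0 : Q 0 = q 0 := by
    rw [hQ 0 (by omega)]
    exact congrArg q (Fin.ext rfl)
  have hbfN : ∀ (i : ℕ) (h : i < k),
      bf L SA (Ξ i + 1) (Q (i + 1)) ((Q i).take (Q (i + 1)).length) := by
    intro i h
    have := hbf ⟨i, h⟩
    rwa [hQs ⟨i, h⟩, hQc ⟨i, h⟩, hΞc ⟨i, h⟩] at this
  have hlenN : ∀ (i : ℕ) (h : i < k), (Q (i + 1)).length ≤ (Q i).length := by
    intro i h
    have := hlen ⟨i, h⟩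
    rwa [hQs ⟨i, h⟩, hQc ⟨i, h⟩] at this
  have hmonoN : ∀ (i j : ℕ) (hij : i ≤ j) (hj : j < k), Ξ i ≤ Ξ j := by
    intro i j hij hj
    rw [hΞ i (by omega), hΞ j hj]
    exact hmono.monotone (by simp only [Fin.mk_le_mk]; exact hij)
  have hΞsucc : ∀ i : ℕ, Ξ i < Ξ i + 1 := by
    intro i
    rw [Ordinal.add_one_eq_succ]
    exact Order.lt_succ _
  have hΞsuccne : ∀ i : ℕ, Ξ i + 1 ≠ 0 :=
    fun i => (lt_of_le_of_lt zero_le (hΞsucc i)).ne'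
  -- the choice of extensions
  have EX : ∀ (i : ℕ) (h : i < k) (prev : List ℕ), ∃ c : List ℕ,
      c.length = ((Q i).drop (Q (i + 1)).length ++ prev.drop (Q i).length).length ∧
      bf L SA (Ξ i) ((Q i).take (Q (i + 1)).length ++
        ((Q i).drop (Q (i + 1)).length ++ prev.drop (Q i).length)) (Q (i + 1) ++ c) := by
    intro i h prev
    exact ((bf_pos_iff L SA (hΞsuccne i) _ _).1 (hbfN i h)).2 (Ξ i) (hΞsucc i) _
  set f : ℕ → List ℕ := fun n => Nat.rec (Q 0)
    (fun i prev => if h : i < k then Q (i + 1) ++ Classical.choose (EX i h prev) else []) n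
    with hfdef
  have hf0 : f 0 = Q 0 := by rw [hfdef]; rfl
  have hfs : ∀ (i : ℕ) (h : i < k),
      f (i + 1) = Q (i + 1) ++ Classical.choose (EX i h (f i)) := by
    intro i h
    rw [hfdef]
    exact dif_pos h
  -- basic facts about f
  have hP : ∀ i, i ≤ k → (Q i).length ≤ (Q 0).length ∧ (f i).length = (Q 0).length ∧
      (f i).take (Q i).length = Q i := by
    intro i
    induction i with
    | zero => intro _; rw [hf0]; exact ⟨le_rfl, rfl, List.take_length⟩
    | succ i ihp =>
      intro hik
      have hik' : i < k := by omega
      obtain ⟨hq0, hflen, hftake⟩ := ihp (by omega)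
      obtain ⟨hclen, -⟩ := Classical.choose_spec (EX i hik' (f i))
      have hlen1 := hlenN i hik'
      rw [hfs i hik']
      simp only [List.length_append, List.length_drop] at hclen ⊢
      refine ⟨by omega, by omega, ?_⟩
      exact List.take_left' rfl
  have hfeq : ∀ i, i ≤ k → f i = Q i ++ (f i).drop (Q i).length := by
    intro i hik
    obtain ⟨-, -, hftake⟩ := hP i hik
    conv_lhs => rw [← List.take_append_drop (Q i).length (f i)]
    rw [hftake]
  have hB : ∀ (i : ℕ) (h : i < k), bf L SA (Ξ i) (f i) (f (i + 1)) := by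
    intro i h
    have spec := (Classical.choose_spec (EX i h (f i))).2
    have e : f i = (Q i).take (Q (i + 1)).length ++
        ((Q i).drop (Q (i + 1)).length ++ (f i).drop (Q i).length) := by
      rw [← List.append_assoc, List.take_append_drop]
      exact hfeq i (le_of_lt h)
    rw [hfs i h]
    nth_rewrite 1 [e]
    exact spec
  -- transport along the chain
  have hT : ∀ (t j : ℕ), j + t = k → ∀ (i : ℕ), i < k → i ≤ j →
      bf L SA (Ξ i) (f j) (f k) := by
    intro t
    induction t with
    | zero =>
      intro j hj i hik hij
      have : j = k := by omega
      rw [this]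
      exact bf_refl L SA _ _
    | succ t iht =>
      intro j hj i hik hij
      have hjk : j < k := by omega
      have h1 : bf L SA (Ξ i) (f j) (f (j + 1)) :=
        bf_mono L SA (hmonoN i j hij hjk) (hB j hjk)
      exact bf_trans L SA h1 (iht (j + 1) (by omega) i hik (by omega))
  obtain ⟨hq0k, hfklen, hfktake⟩ := hP k le_rfl
  refine ⟨f k, by rw [hfklen, hQ0], ?_, ?_⟩
  · have : Q k = q (Fin.last k) := by
      rw [hQ k (by omega)]
      exact congrArg q (Fin.ext rfl)
    rw [← this]
    exact hfktake
  · intro i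
    have hik : (i : ℕ) < k := i.2
    rw [hΞc i, hQc i]
    rcases Nat.eq_zero_or_pos (i : ℕ) with h0 | hpos
    · -- bottom tuple: no truncation needed
      rw [h0]
      have htk : (f k).take (Q 0).length = f k := by
        rw [← hfklen]
        exact List.take_length
      rw [htk]
      have h1 : bf L SA (Ξ 0) (f 0) (f 1) := hB 0 (by omega)
      have h2 : bf L SA (Ξ 0) (f 1) (f k) := hT (k - 1) 1 (by omega) 0 (by omega) (by omega)
      have := bf_trans L SA h1 h2
      rwa [hf0] at this
    · -- the general case: remove the middle junk
      have hne : Ξ (i : ℕ) ≠ 0 := by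
        rw [hΞ (i : ℕ) hik]
        have h01 : (⟨0, by omega⟩ : Fin k) < ⟨(i : ℕ), hik⟩ := by
          simp only [Fin.mk_lt_mk]; omega
        exact (lt_of_le_of_lt zero_le (hmono h01)).ne'
      have hchain : bf L SA (Ξ (i : ℕ)) (f (i : ℕ)) (f k) :=
        bf_trans L SA (hB (i : ℕ) hik)
          (hT (k - ((i : ℕ) + 1)) ((i : ℕ) + 1) (by omega) (i : ℕ) hik (by omega))
      obtain ⟨hqi0, hfilen, -⟩ := hP (i : ℕ) (le_of_lt hik)
      have e1 : f (i : ℕ) = Q (i : ℕ) ++ ((f (i : ℕ)).drop (Q (i : ℕ)).length ++ []) := by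
        rw [List.append_nil]
        exact hfeq (i : ℕ) (le_of_lt hik)
      have e2 : f k = (f k).take (Q (i : ℕ)).length ++ ((f k).drop (Q (i : ℕ)).length ++ []) := by
        rw [List.append_nil, List.take_append_drop]
      rw [e1, e2] at hchain
      have hxl : (Q (i : ℕ)).length = ((f k).take (Q (i : ℕ)).length).length := by
        rw [List.length_take]
        omega
      have hml : ((f (i : ℕ)).drop (Q (i : ℕ)).length).length
          = ((f k).drop (Q (i : ℕ)).length).length := by
        simp only [List.length_drop]
        omega
      have := bf_removeMid L SA hne hxl hml hchain
      simpa using this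

end DCC
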